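/- arXiv:1803.01299 — 2 statements merged into one kernel-verified Lean document; each statement's English description precedes it below -/
import Mathlib

section
/- Scalar version of the ternary update rule: for m ∈ ℝ, ρ > 0, λ ≥ 0, and a ∈ {−1, 0, +1}, the function g(θ) = θ·m − λθ² − ρ(θ − a)² on {−1, 0, +1} is maximized at θ* = +1 if m ≥ ρ(1 − 2a) + λ, at θ* = −1 if m ≤ −ρ(1 + 2a) − λ, and at θ* = 0 otherwise; i.e., g(θ*) ≥ g(θ) for all θ ∈ {−1, 0, +1}. -/
/-!
Only the three values `g (-1)`, `g 0`, `g 1` matter. The differences `g 1 - g 0` and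
`g (-1) - g 0` are, up to sign, `m` minus the two thresholds, so each threshold decides a
comparison with `0`; the remaining comparison `g 1 - g (-1) = 2 (m + 2ρa)` has the right sign
under either threshold condition because `ρ + λ ≥ 0`.
-/

namespace TernaryUpdate

def objective (m ρ lam a θ : ℝ) : ℝ := θ * m - lam * θ ^ 2 - ρ * (θ - a) ^ 2

section

variable (m ρ lam a : ℝ)

lemma objective_one_sub_zero :
    objective m ρ lam a 1 - objective m ρ lam a 0 = m - (ρ * (1 - 2 * a) + lam) := by
  unfold objective; ring

lemma objective_neg_one_sub_zero :
    objective m ρ lam a (-1) - objective m ρ lam a 0 = -(ρ * (1 + 2 * a)) - lam - m := by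
  unfold objective; ring

lemma objective_one_sub_neg_one :
    objective m ρ lam a 1 - objective m ρ lam a (-1) = 2 * (m + 2 * ρ * a) := by
  unfold objective; ring

end

variable {m ρ lam a : ℝ}

lemma objective_le_one (hρlam : 0 ≤ ρ + lam) (hm : ρ * (1 - 2 * a) + lam ≤ m) :
    ∀ θ : ℝ, θ = -1 ∨ θ = 0 ∨ θ = 1 → objective m ρ lam a θ ≤ objective m ρ lam a 1 := by
  have hzero := objective_one_sub_zero m ρ lam a
  have hneg := objective_one_sub_neg_one m ρ lam a
  rintro θ (rfl | rfl | rfl) <;> linarith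

lemma objective_le_neg_one (hρlam : 0 ≤ ρ + lam) (hm : m ≤ -(ρ * (1 + 2 * a)) - lam) :
    ∀ θ : ℝ, θ = -1 ∨ θ = 0 ∨ θ = 1 → objective m ρ lam a θ ≤ objective m ρ lam a (-1) := by
  have hzero := objective_neg_one_sub_zero m ρ lam a
  have hpos := objective_one_sub_neg_one m ρ lam a
  rintro θ (rfl | rfl | rfl) <;> linarith

lemma objective_le_zero (hlow : -(ρ * (1 + 2 * a)) - lam ≤ m)
    (hhigh : m ≤ ρ * (1 - 2 * a) + lam) :
    ∀ θ : ℝ, θ = -1 ∨ θ = 0 ∨ θ = 1 → objective m ρ lam a θ ≤ objective m ρ lam a 0 := by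
  have hneg := objective_neg_one_sub_zero m ρ lam a
  have hpos := objective_one_sub_zero m ρ lam a
  rintro θ (rfl | rfl | rfl) <;> linarith

end TernaryUpdate

open TernaryUpdate in
theorem scalar_ternary_update_general (m ρ lam a : ℝ) (hρ : 0 < ρ) (hlam : 0 ≤ lam)
    (g : ℝ → ℝ) (hg : ∀ θ, g θ = θ * m - lam * θ ^ 2 - ρ * (θ - a) ^ 2)
    (θstar : ℝ)
    (hθstar : θstar =
      if ρ * (1 - 2 * a) + lam ≤ m then 1
      else if m ≤ -(ρ * (1 + 2 * a)) - lam then -1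
      else 0) :
    ∀ θ : ℝ, θ = -1 ∨ θ = 0 ∨ θ = 1 → g θ ≤ g θstar := by
  obtain rfl : g = objective m ρ lam a := funext hg
  have hρlam : 0 ≤ ρ + lam := by linarith
  split_ifs at hθstar with hone hneg <;> subst hθstar
  · exact objective_le_one hρlam hone
  · exact objective_le_neg_one hρlam hneg
  · exact objective_le_zero (not_le.mp hneg).le (not_le.mp hone).le

theorem scalar_ternary_update (m ρ lam a : ℝ) (hρ : 0 < ρ) (hlam : 0 ≤ lam)
    (ha : a = -1 ∨ a = 0 ∨ a = 1)
    (g : ℝ → ℝ) (hg : ∀ θ, g θ = θ * m - lam * θ ^ 2 - ρ * (θ - a) ^ 2)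
    (θstar : ℝ)
    (hθstar : θstar =
      if ρ * (1 - 2 * a) + lam ≤ m then 1
      else if m ≤ -(ρ * (1 + 2 * a)) - lam then -1
      else 0) :
    ∀ θ : ℝ, θ = -1 ∨ θ = 0 ∨ θ = 1 → g θ ≤ g θstar :=
  scalar_ternary_update_general m ρ lam a hρ hlam g hg θstar hθstar
end

section
/- Let f_t(x, θ) be differentiable in θ with dynamics x_{t+1} = f_t(x_t, θ_t), terminal loss J(θ) = (1/S) Σ_s Φ_s(x^θ_{s,T}), and co-states p^θ_{s,t} defined by p^θ_{s,T} = −(1/S)∇Φ_s(x^θ_{s,T}) and p^θ_{s,t} = (∇_x f_t(x^θ_{s,t}, θ_t))ᵀ p^θ_{s,t+1}. Then ∇_{θ_t} J(θ) = −∇_θ Σ_{s=1}^S H_t(x^θ_{s,t}, p^θ_{s,t+1}, θ_t), where H_t(x, p, θ) = ⟨p, f_t(x, θ)⟩. Consequently, gradient ascent on the per-layer Hamiltonians equals gradient descent with back-propagation on J. -/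
/-!
Perturbing `θ t` changes the trajectory only from `x (t + 1) = f t (x t) (θ t)` on, after which
it follows the unperturbed flow up to time `T`. Backward induction with the chain rule shows that
the co-state recursion makes `p (t + 1)` the gradient at `x (t + 1)` of the cost-to-go
`y ↦ -(1/S) Φ (flow from t + 1 to T of y)`. One more chain rule through `φ ↦ f t (x t) φ` turns
both sides of the identity into the adjoint of `∂_θ f t` applied to `p (t + 1)`.
-/

open InnerProductSpace RealInnerProductSpace

section Gradient

variable {E F : Type*} [NormedAddCommGroup E] [InnerProductSpace ℝ E] [CompleteSpace E]
  [NormedAddCommGroup F] [InnerProductSpace ℝ F] [CompleteSpace F]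

theorem hasGradientAt_inner_right (p y : F) : HasGradientAt (fun z => ⟪p, z⟫) p y :=
  hasGradientAt_iff_hasFDerivAt.2 (innerSL ℝ p).hasFDerivAt

theorem HasGradientAt.neg {h : F → ℝ} {q y : F} (hh : HasGradientAt h q y) :
    HasGradientAt (fun z => -h z) (-q) y := by
  rw [hasGradientAt_iff_hasFDerivAt, map_neg]
  exact (hasGradientAt_iff_hasFDerivAt.1 hh).neg

theorem HasGradientAt.const_mul {h : F → ℝ} {q y : F} (hh : HasGradientAt h q y) (c : ℝ) :
    HasGradientAt (fun z => c * h z) (c • q) y := by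
  rw [hasGradientAt_iff_hasFDerivAt, map_smulₛₗ]
  exact (hasGradientAt_iff_hasFDerivAt.1 hh).const_mul c

theorem HasGradientAt.sum {ι : Type*} (u : Finset ι) {h : ι → F → ℝ} {q : ι → F} {y : F}
    (hh : ∀ i ∈ u, HasGradientAt (h i) (q i) y) :
    HasGradientAt (fun z => ∑ i ∈ u, h i z) (∑ i ∈ u, q i) y := by
  rw [hasGradientAt_iff_hasFDerivAt, map_sum]
  exact HasFDerivAt.fun_sum fun i hi => hasGradientAt_iff_hasFDerivAt.1 (hh i hi)

theorem HasGradientAt.comp_hasFDerivAt {h : F → ℝ} {g : E → F} {q : F} {L : E →L[ℝ] F} {y : E}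
    (hh : HasGradientAt h q (g y)) (hg : HasFDerivAt g L y) :
    HasGradientAt (h ∘ g) (L.adjoint q) y := by
  have hdual : toDual ℝ E (L.adjoint q) = (toDual ℝ F q).comp L :=
    ContinuousLinearMap.ext fun v => ContinuousLinearMap.adjoint_inner_left L v q
  rw [hasGradientAt_iff_hasFDerivAt, hdual]
  exact (hasGradientAt_iff_hasFDerivAt.1 hh).comp y hg

end Gradient

section Dynamics

variable {α : Type*}

def evolve (g : ℕ → α → α) (t : ℕ) : ℕ → α → α
  | 0 => id
  | n + 1 => evolve g (t + 1) n ∘ g t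

theorem eq_evolve_of_succ_eq {g : ℕ → α → α} {z : ℕ → α} {t : ℕ}
    (hz : ∀ k ≥ t, z (k + 1) = g k (z k)) (n : ℕ) : z (t + n) = evolve g t n (z t) := by
  induction n generalizing t with
  | zero => rfl
  | succ n ih =>
    rw [show t + (n + 1) = t + 1 + n by omega, ih fun k hk => hz k (by omega), hz t le_rfl]
    rfl

theorem trajectory_congr {β : Type*} {f : ℕ → α → β → α} {x : (ℕ → β) → ℕ → α} {a : α}
    (hx0 : ∀ θ, x θ 0 = a) (hx : ∀ θ k, x θ (k + 1) = f k (x θ k) (θ k))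
    {θ θ' : ℕ → β} {k : ℕ} (h : ∀ j < k, θ' j = θ j) : x θ' k = x θ k := by
  induction k with
  | zero => rw [hx0, hx0]
  | succ k ih => rw [hx, hx, ih fun j hj => h j (by omega), h k k.lt_succ_self]

theorem trajectory_update_eq_evolve {β : Type*} {f : ℕ → α → β → α} {x : (ℕ → β) → ℕ → α}
    {a : α} (hx0 : ∀ θ, x θ 0 = a) (hx : ∀ θ k, x θ (k + 1) = f k (x θ k) (θ k))
    (θ : ℕ → β) (t n : ℕ) (φ : β) :
    x (Function.update θ t φ) (t + 1 + n) =
      evolve (fun k y => f k y (θ k)) (t + 1) n (f t (x θ t) φ) := by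
  have hprefix : x (Function.update θ t φ) t = x θ t :=
    trajectory_congr hx0 hx fun j hj => Function.update_of_ne hj.ne _ _
  have hsuffix : ∀ k ≥ t + 1,
      x (Function.update θ t φ) (k + 1) = f k (x (Function.update θ t φ) k) (θ k) :=
    fun k hk => by rw [hx, Function.update_of_ne (by omega)]
  rw [eq_evolve_of_succ_eq (g := fun k y => f k y (θ k)) hsuffix n, hx, hprefix,
    Function.update_self]

end Dynamics

section Costate

variable {E : Type*} [NormedAddCommGroup E] [InnerProductSpace ℝ E] [CompleteSpace E]

theorem hasGradientAt_comp_evolve_of_costate {g : ℕ → E → E} {z q : ℕ → E} {Ψ : E → ℝ}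
    {T : ℕ} (hg : ∀ k < T, DifferentiableAt ℝ (g k) (z k))
    (hz : ∀ k < T, z (k + 1) = g k (z k)) (hΨ : HasGradientAt Ψ (q T) (z T))
    (hq : ∀ k < T, q k = (fderiv ℝ (g k) (z k)).adjoint (q (k + 1)))
    (n t : ℕ) (htn : t + n = T) : HasGradientAt (Ψ ∘ evolve g t n) (q t) (z t) := by
  induction n generalizing t with
  | zero => subst htn; exact hΨ
  | succ n ih =>
    have hnext := ih (t + 1) (by omega)
    rw [hz t (by omega)] at hnext
    rw [hq t (by omega)]
    exact hnext.comp_hasFDerivAt (hg t (by omega)).hasFDerivAt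

end Costate

open Finset RealInnerProductSpace in
theorem msa_gradient_ascent_is_backprop_general (d m S T : ℕ)
    (f : ℕ → EuclideanSpace ℝ (Fin d) → EuclideanSpace ℝ (Fin m) →
      EuclideanSpace ℝ (Fin d))
    (hf : ∀ t, Differentiable ℝ
      (fun q : EuclideanSpace ℝ (Fin d) × EuclideanSpace ℝ (Fin m) => f t q.1 q.2))
    (Φ : Fin S → EuclideanSpace ℝ (Fin d) → ℝ)
    (hΦ : ∀ s, Differentiable ℝ (Φ s))
    (x0 : Fin S → EuclideanSpace ℝ (Fin d))
    (x : Fin S → (ℕ → EuclideanSpace ℝ (Fin m)) → ℕ → EuclideanSpace ℝ (Fin d))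
    (hx0 : ∀ s θ, x s θ 0 = x0 s)
    (hx : ∀ s θ t, x s θ (t + 1) = f t (x s θ t) (θ t))
    (p : Fin S → (ℕ → EuclideanSpace ℝ (Fin m)) → ℕ → EuclideanSpace ℝ (Fin d))
    (hpT : ∀ s θ, p s θ T = -(1 / (S : ℝ)) • gradient (Φ s) (x s θ T))
    (hp : ∀ s θ t, t < T → p s θ t =
      (fderiv ℝ (fun y => f t y (θ t)) (x s θ t)).adjoint (p s θ (t + 1)))
    (J : (ℕ → EuclideanSpace ℝ (Fin m)) → ℝ)
    (hJ : ∀ θ, J θ = (1 / (S : ℝ)) * ∑ s, Φ s (x s θ T)) :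
    ∀ (θ : ℕ → EuclideanSpace ℝ (Fin m)) (t : ℕ), t < T →
      gradient (fun φ => J (Function.update θ t φ)) (θ t) =
      - gradient (fun φ => ∑ s, ⟪p s θ (t + 1), f t (x s θ t) φ⟫) (θ t) := by
  intro θ t ht
  set g := fun k y => f k y (θ k)
  set F := fun s φ => f t (x s θ t) φ
  set Ψ := fun s y => -(1 / (S : ℝ)) * Φ s y
  obtain ⟨n, htn⟩ : ∃ n, t + 1 + n = T := ⟨T - (t + 1), by omega⟩
  have hF : ∀ s, HasFDerivAt (F s) (fderiv ℝ (F s) (θ t)) (θ t) := fun s =>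
    ((hf t).comp ((differentiable_const _).prodMk differentiable_id) _).hasFDerivAt
  have hcost : ∀ s, HasGradientAt (Ψ s ∘ evolve g (t + 1) n) (p s θ (t + 1)) (F s (θ t)) := by
    intro s
    rw [show F s (θ t) = x s θ (t + 1) from (hx s θ t).symm]
    refine hasGradientAt_comp_evolve_of_costate (fun k _ => ?_) (fun k _ => hx s θ k) ?_
      (hp s θ) n (t + 1) htn
    · exact (hf k).comp (differentiable_id.prodMk (differentiable_const _)) _
    · rw [hpT]
      exact (hΦ s _).hasGradientAt.const_mul _
  have hJ_update : ∀ φ, J (Function.update θ t φ) =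
      -∑ s, (Ψ s ∘ evolve g (t + 1) n) (F s φ) := by
    intro φ
    simp only [hJ, ← htn, trajectory_update_eq_evolve (hx0 _) (hx _), Function.comp_apply, Ψ,
      neg_mul, sum_neg_distrib, neg_neg, mul_sum]
    rfl
  have hL : HasGradientAt (fun φ => J (Function.update θ t φ))
      (-∑ s, (fderiv ℝ (F s) (θ t)).adjoint (p s θ (t + 1))) (θ t) := by
    simp only [hJ_update]
    exact (HasGradientAt.sum _ fun s _ => (hcost s).comp_hasFDerivAt (hF s)).neg
  have hR : HasGradientAt (fun φ => ∑ s, ⟪p s θ (t + 1), F s φ⟫)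
      (∑ s, (fderiv ℝ (F s) (θ t)).adjoint (p s θ (t + 1))) (θ t) :=
    HasGradientAt.sum _ fun s _ => (hasGradientAt_inner_right _ _).comp_hasFDerivAt (hF s)
  rw [hL.gradient, hR.gradient]

open Finset RealInnerProductSpace in
theorem msa_gradient_ascent_is_backprop (d m S T : ℕ) (hS : 0 < S) (hT : 0 < T)
    (f : ℕ → EuclideanSpace ℝ (Fin d) → EuclideanSpace ℝ (Fin m) →
      EuclideanSpace ℝ (Fin d))
    (hf : ∀ t, Differentiable ℝ
      (fun q : EuclideanSpace ℝ (Fin d) × EuclideanSpace ℝ (Fin m) => f t q.1 q.2))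
    (Φ : Fin S → EuclideanSpace ℝ (Fin d) → ℝ)
    (hΦ : ∀ s, Differentiable ℝ (Φ s))
    (x0 : Fin S → EuclideanSpace ℝ (Fin d))
    (x : Fin S → (ℕ → EuclideanSpace ℝ (Fin m)) → ℕ → EuclideanSpace ℝ (Fin d))
    (hx0 : ∀ s θ, x s θ 0 = x0 s)
    (hx : ∀ s θ t, x s θ (t + 1) = f t (x s θ t) (θ t))
    (p : Fin S → (ℕ → EuclideanSpace ℝ (Fin m)) → ℕ → EuclideanSpace ℝ (Fin d))
    (hpT : ∀ s θ, p s θ T = -(1 / (S : ℝ)) • gradient (Φ s) (x s θ T))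
    (hp : ∀ s θ t, t < T → p s θ t =
      (fderiv ℝ (fun y => f t y (θ t)) (x s θ t)).adjoint (p s θ (t + 1)))
    (J : (ℕ → EuclideanSpace ℝ (Fin m)) → ℝ)
    (hJ : ∀ θ, J θ = (1 / (S : ℝ)) * ∑ s, Φ s (x s θ T)) :
    ∀ (θ : ℕ → EuclideanSpace ℝ (Fin m)) (t : ℕ), t < T →
      gradient (fun φ => J (Function.update θ t φ)) (θ t) =
      - gradient (fun φ => ∑ s, ⟪p s θ (t + 1), f t (x s θ t) φ⟫) (θ t) :=
  msa_gradient_ascent_is_backprop_general d m S T f hf Φ hΦ x0 x hx0 hx p hpT hp J hJ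
end
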